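/- arXiv:2310.00257 — 8 statements merged into one kernel-verified Lean document; each statement's English description precedes it below -/
import Mathlib

section
/- Let C_1,...,C_k be a partition of V, let e be the all-ones vector, and define X* = (1/k) Σ_{l=1}^k (k·1_{C_l} - e)(k·1_{C_l} - e)^T. Then the kernel of X* equals J = {x ∈ ℝ^V : ⟨x, 1_{C_1}⟩ = ... = ⟨x, 1_{C_k}⟩}. -/
open Matrix

/-- Indicator function of a finite set. -/
def indFun {V : Type*} [DecidableEq V] (s : Finset V) : V → ℝ :=
  fun v => if v ∈ s then (1 : ℝ) else 0

/-- The vector `k·1_{C_l} − e`. -/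
def uVec {V : Type*} [DecidableEq V] (k : ℕ) (s : Finset V) : V → ℝ :=
  fun v => (k : ℝ) * indFun s v - 1

/-- The matrix `X* = (1/k) Σ_l (k·1_{C_l} − e)(k·1_{C_l} − e)ᵀ`. -/
noncomputable def Xstar {V : Type*} [Fintype V] [DecidableEq V] {k : ℕ}
    (C : Fin k → Finset V) : Matrix V V ℝ :=
  (k : ℝ)⁻¹ • ∑ l : Fin k, Matrix.vecMulVec (uVec k (C l)) (uVec k (C l))

lemma sum_indFun {V : Type*} [DecidableEq V] {k : ℕ}
    (C : Fin k → Finset V)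
    (hdisj : ∀ i j : Fin k, i ≠ j → Disjoint (C i) (C j))
    (hcover : ∀ v : V, ∃ l : Fin k, v ∈ C l) (v : V) :
    ∑ l : Fin k, indFun (C l) v = 1 := by
  obtain ⟨l0, hl0⟩ := hcover v
  rw [Finset.sum_eq_single l0]
  · simp [indFun, hl0]
  · intro b _ hb
    have : v ∉ C b := by
      intro hvb
      exact (hdisj b l0 hb).forall_ne_finset hvb hl0 rfl
    simp [indFun, this]
  · simp

lemma Xstar_mulVec {V : Type*} [Fintype V] [DecidableEq V] {k : ℕ}
    (C : Fin k → Finset V) (x : V → ℝ) (v : V) :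
    (Xstar C).mulVec x v =
      (k : ℝ)⁻¹ * ∑ l : Fin k, uVec k (C l) v * (uVec k (C l) ⬝ᵥ x) := by
  simp only [Xstar, Matrix.mulVec, dotProduct, Matrix.smul_apply, Matrix.sum_apply,
    Matrix.vecMulVec_apply, smul_eq_mul]
  simp only [Finset.mul_sum, Finset.sum_mul]
  rw [Finset.sum_comm]
  apply Finset.sum_congr rfl
  intro l _
  apply Finset.sum_congr rfl
  intro w _
  ring

lemma uVec_dot {V : Type*} [Fintype V] [DecidableEq V] {k : ℕ}
    (s : Finset V) (x : V → ℝ) :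
    uVec k s ⬝ᵥ x = (k : ℝ) * (x ⬝ᵥ indFun s) - ∑ v, x v := by
  simp only [dotProduct, uVec, sub_mul, one_mul, Finset.sum_sub_distrib, Finset.mul_sum]
  congr 1
  apply Finset.sum_congr rfl
  intro v _
  ring

theorem stmt1 {V : Type*} [Fintype V] [DecidableEq V] {k : ℕ} (hk : 0 < k)
    (C : Fin k → Finset V)
    (hdisj : ∀ i j : Fin k, i ≠ j → Disjoint (C i) (C j))
    (hcover : ∀ v : V, ∃ l : Fin k, v ∈ C l)
    (hne : ∀ l : Fin k, (C l).Nonempty) :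
    ∀ x : V → ℝ, (Xstar C).mulVec x = 0 ↔
      ∀ l : Fin k, x ⬝ᵥ indFun (C l) = x ⬝ᵥ indFun (C ⟨0, hk⟩) := by
  intro x
  have hkR : (k : ℝ) ≠ 0 := Nat.cast_ne_zero.mpr hk.ne'
  have hS : ∑ l : Fin k, (x ⬝ᵥ indFun (C l)) = ∑ v, x v := by
    simp only [dotProduct]
    rw [Finset.sum_comm]
    apply Finset.sum_congr rfl
    intro v _
    rw [← Finset.mul_sum, sum_indFun C hdisj hcover v, mul_one]
  constructor
  · intro h l
    -- x ⬝ᵥ mulVec x = 0 gives all c_l = 0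
    have h0 : x ⬝ᵥ (Xstar C).mulVec x = 0 := by rw [h]; simp
    have hquad : x ⬝ᵥ (Xstar C).mulVec x =
        (k : ℝ)⁻¹ * ∑ l : Fin k, (uVec k (C l) ⬝ᵥ x) ^ 2 := by
      simp only [dotProduct, Xstar_mulVec, Finset.mul_sum]
      rw [Finset.sum_comm]
      apply Finset.sum_congr rfl
      intro l _
      rw [sq, Finset.sum_mul_sum, Finset.mul_sum]
      apply Finset.sum_congr rfl
      intro v _
      rw [Finset.mul_sum]
      apply Finset.sum_congr rfl
      intro w _
      ring
    have hsumsq : ∑ l : Fin k, (uVec k (C l) ⬝ᵥ x) ^ 2 = 0 := by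
      have h0' := hquad.symm.trans h0
      rcases mul_eq_zero.mp h0' with h' | h'
      · exact absurd (inv_eq_zero.mp h') hkR
      · exact h'
    have hall : ∀ l, uVec k (C l) ⬝ᵥ x = 0 := by
      intro l
      have := Finset.sum_eq_zero_iff_of_nonneg (fun i _ => sq_nonneg (uVec k (C i) ⬝ᵥ x)) |>.mp hsumsq l (Finset.mem_univ l)
      exact pow_eq_zero_iff (n := 2) (by norm_num) |>.mp this
    have h1 := hall l
    have h2 := hall ⟨0, hk⟩
    rw [uVec_dot] at h1 h2
    have : (k : ℝ) * (x ⬝ᵥ indFun (C l)) = (k : ℝ) * (x ⬝ᵥ indFun (C ⟨0, hk⟩)) := by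
      linarith
    exact mul_left_cancel₀ hkR this
  · intro h
    have hall : ∀ l, uVec k (C l) ⬝ᵥ x = 0 := by
      intro l
      rw [uVec_dot, ← hS]
      have : ∑ l : Fin k, (x ⬝ᵥ indFun (C l)) = (k : ℝ) * (x ⬝ᵥ indFun (C ⟨0, hk⟩)) := by
        rw [Finset.sum_congr rfl fun i _ => h i]
        simp [mul_comm]
      rw [this, h l]
      ring
    funext v
    rw [Xstar_mulVec]
    simp [hall]
end

section
/- Let Z be a positive semidefinite matrix with ⟨Z, X*⟩ = 0, where X* = (1/k) Σ_l (k·1_{C_l} - e)(k·1_{C_l} - e)^T. Then the range of Z is contained in J = {x : ⟨x, 1_{C_1}⟩ = ... = ⟨x, 1_{C_k}⟩}, and moreover rank(X*) + rank(Z) = |V| if and only if range(Z) = J. -/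
/-!
Write `X* = (1/k) UᵀU`, where the rows of `U` are the vectors `u_l = k·1_{C_l} − e`. Then
`⟨Z, X*⟩ = (1/k) tr (U Z Uᵀ)` is the trace of a positive semidefinite matrix, so `U Z Uᵀ = 0`;
as `Z` is positive semidefinite this forces `U Z = 0`, i.e. `range Z ⊆ ker U = ker X*`. Because the
`C_l` partition `V`, `⟨u_l, x⟩ = k ⟨x, 1_{C_l}⟩ − Σ_v x_v`, so `ker U` is exactly `J`. The rank
condition is then rank–nullity for `X*`: the inclusion `range Z ⊆ ker X*` is an equality iff the
dimensions agree.
-/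

open Matrix

namespace Matrix

open scoped ComplexOrder in
theorem PosSemidef.mul_eq_zero_of_trace_mul_conjTranspose_mul_self_eq_zero
    {m n 𝕜 : Type*} [Fintype m] [Fintype n] [RCLike 𝕜]
    {Z : Matrix n n 𝕜} (hZ : Z.PosSemidef) {U : Matrix m n 𝕜}
    (h : (Z * (Uᴴ * U)).trace = 0) : U * Z = 0 := by
  classical
  have hUZU : U * Z * Uᴴ = 0 := by
    refine (hZ.mul_mul_conjTranspose_same U).trace_eq_zero_iff.mp ?_
    rwa [trace_mul_cycle, trace_mul_comm]
  have hZU : Z * Uᴴ = 0 := by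
    -- with `w = Uᴴ eᵢ`, `star w ⬝ᵥ Z w = (U Z Uᴴ)ᵢᵢ = 0`, and `Z ≥ 0` turns this into `Z w = 0`
    refine ext_of_mulVec_single fun i => ?_
    rw [zero_mulVec, ← mulVec_mulVec, ← hZ.dotProduct_mulVec_zero_iff, mulVec_mulVec,
      star_mulVec, conjTranspose_conjTranspose, ← dotProduct_mulVec, mulVec_mulVec,
      ← Matrix.mul_assoc, hUZU, zero_mulVec, dotProduct_zero]
  simpa [hZ.isHermitian.eq] using congrArg (·ᴴ) hZU

theorem rank_add_rank_eq_card_iff_range_eq_ker {n K : Type*} [Fintype n] [Field K]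
    {A B : Matrix n n K} (h : LinearMap.range B.mulVecLin ≤ LinearMap.ker A.mulVecLin) :
    A.rank + B.rank = Fintype.card n ↔ LinearMap.range B.mulVecLin = LinearMap.ker A.mulVecLin := by
  have hA : A.rank + Module.finrank K (LinearMap.ker A.mulVecLin) = Fintype.card n := by
    rw [rank, LinearMap.finrank_range_add_finrank_ker, Module.finrank_fintype_fun_eq_card]
  refine ⟨fun h' => Submodule.eq_of_le_of_finrank_eq h ?_, fun h' => ?_⟩
  · rw [← rank]; omega
  · rw [← hA, ← h']; rfl

end Matrix

theorem Fintype.forall_eq_iff_forall_card_mul_eq_sum {ι K : Type*} [Fintype ι] [Field K]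
    [CharZero K] (a : ι → K) (i₀ : ι) :
    (∀ i, a i = a i₀) ↔ ∀ i, Fintype.card ι * a i = ∑ j, a j := by
  have : Nonempty ι := ⟨i₀⟩
  have hcard : (Fintype.card ι : K) ≠ 0 := Nat.cast_ne_zero.mpr Fintype.card_ne_zero
  constructor
  · intro h i
    simp [h i, h _]
  · intro h i
    exact mul_left_cancel₀ hcard ((h i).trans (h i₀).symm)

section Partition

variable {V : Type*} [DecidableEq V] {k : ℕ}

theorem sum_indFun_eq_one {C : Fin k → Finset V}
    (hdisj : ∀ i j : Fin k, i ≠ j → Disjoint (C i) (C j))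
    (hcover : ∀ v : V, ∃ l : Fin k, v ∈ C l) : ∑ l, indFun (C l) = 1 := by
  ext v
  obtain ⟨l₀, hl₀⟩ := hcover v
  rw [Finset.sum_apply, Finset.sum_eq_single l₀]
  · simp [indFun, hl₀]
  · intro l _ hl
    simp [indFun, Finset.disjoint_left.mp (hdisj l l₀ hl) |>.mt (not_not.mpr hl₀)]
  · simp

variable [Fintype V] (C : Fin k → Finset V)

def uMat : Matrix (Fin k) V ℝ := Matrix.of fun l => uVec k (C l)

theorem Xstar_eq_smul_conjTranspose_mul_self :
    Xstar C = (k : ℝ)⁻¹ • ((uMat C)ᴴ * uMat C) := by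
  ext i j
  simp [Xstar, uMat, mul_apply, vecMulVec_apply, Matrix.sum_apply]

theorem posSemidef_Xstar : (Xstar C).PosSemidef := by
  rw [Xstar_eq_smul_conjTranspose_mul_self]
  exact (posSemidef_conjTranspose_mul_self _).smul (by positivity)

theorem ker_Xstar (hk : k ≠ 0) :
    LinearMap.ker (Xstar C).mulVecLin = LinearMap.ker (uMat C).mulVecLin := by
  rw [← ker_mulVecLin_conjTranspose_mul_self (uMat C)]
  ext x
  simp only [LinearMap.mem_ker, mulVecLin_apply, Xstar_eq_smul_conjTranspose_mul_self, smul_mulVec,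
    smul_eq_zero, inv_eq_zero, Nat.cast_eq_zero, hk, false_or]

theorem uMat_mulVec_eq_zero_iff (x : V → ℝ) :
    uMat C *ᵥ x = 0 ↔ ∀ l, uVec k (C l) ⬝ᵥ x = 0 :=
  funext_iff

theorem uVec_dotProduct (s : Finset V) (x : V → ℝ) :
    uVec k s ⬝ᵥ x = k * (x ⬝ᵥ indFun s) - ∑ v, x v := by
  simp only [uVec, dotProduct, Finset.mul_sum, ← Finset.sum_sub_distrib]
  congr 1; ext v; ring

variable {C}

theorem forall_dotProduct_indFun_eq_iff (hdisj : ∀ i j : Fin k, i ≠ j → Disjoint (C i) (C j))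
    (hcover : ∀ v : V, ∃ l : Fin k, v ∈ C l) (l₀ : Fin k) (x : V → ℝ) :
    (∀ l, x ⬝ᵥ indFun (C l) = x ⬝ᵥ indFun (C l₀)) ↔ uMat C *ᵥ x = 0 := by
  have hsum : ∑ l, x ⬝ᵥ indFun (C l) = ∑ v, x v := by
    rw [← dotProduct_sum, sum_indFun_eq_one hdisj hcover, dotProduct_one]
  simp only [uMat_mulVec_eq_zero_iff, uVec_dotProduct, sub_eq_zero, ← hsum]
  simpa using Fintype.forall_eq_iff_forall_card_mul_eq_sum (fun l => x ⬝ᵥ indFun (C l)) l₀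

end Partition

theorem stmt3_general {V : Type*} [Fintype V] [DecidableEq V] {k : ℕ} (hk : 0 < k)
    (C : Fin k → Finset V)
    (hdisj : ∀ i j : Fin k, i ≠ j → Disjoint (C i) (C j))
    (hcover : ∀ v : V, ∃ l : Fin k, v ∈ C l)
    (Z : Matrix V V ℝ) (hZ : Z.PosSemidef)
    (horth : (Z * (Xstar C)ᵀ).trace = 0) :
    (Set.range (Z.mulVec) ⊆
        {x : V → ℝ | ∀ l : Fin k, x ⬝ᵥ indFun (C l) = x ⬝ᵥ indFun (C ⟨0, hk⟩)})
    ∧ ((Xstar C).rank + Z.rank = Fintype.card V ↔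
        Set.range (Z.mulVec) =
          {x : V → ℝ | ∀ l : Fin k, x ⬝ᵥ indFun (C l) = x ⬝ᵥ indFun (C ⟨0, hk⟩)}) := by
  have hJ : {x : V → ℝ | ∀ l : Fin k, x ⬝ᵥ indFun (C l) = x ⬝ᵥ indFun (C ⟨0, hk⟩)} =
      LinearMap.ker (Xstar C).mulVecLin := by
    ext x
    rw [SetLike.mem_coe, ker_Xstar C hk.ne', LinearMap.mem_ker, mulVecLin_apply]
    exact forall_dotProduct_indFun_eq_iff hdisj hcover _ x
  have hUZ : uMat C * Z = 0 := by
    refine hZ.mul_eq_zero_of_trace_mul_conjTranspose_mul_self_eq_zero ?_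
    have hXt : (Xstar C)ᵀ = Xstar C := by
      simpa using (posSemidef_Xstar C).isHermitian.eq
    rw [hXt, Xstar_eq_smul_conjTranspose_mul_self, Matrix.mul_smul, trace_smul] at horth
    simpa [hk.ne'] using horth
  have hle : LinearMap.range Z.mulVecLin ≤ LinearMap.ker (Xstar C).mulVecLin := by
    rintro _ ⟨y, rfl⟩
    rw [ker_Xstar C hk.ne', LinearMap.mem_ker, mulVecLin_apply, mulVecLin_apply, mulVec_mulVec,
      hUZ, zero_mulVec]
  rw [hJ, ← Matrix.coe_mulVecLin, ← LinearMap.coe_range, SetLike.coe_subset_coe, SetLike.coe_set_eq]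
  exact ⟨hle, rank_add_rank_eq_card_iff_range_eq_ker hle⟩

theorem stmt3 {V : Type*} [Fintype V] [DecidableEq V] {k : ℕ} (hk : 0 < k)
    (C : Fin k → Finset V)
    (hdisj : ∀ i j : Fin k, i ≠ j → Disjoint (C i) (C j))
    (hcover : ∀ v : V, ∃ l : Fin k, v ∈ C l)
    (hne : ∀ l : Fin k, (C l).Nonempty)
    (Z : Matrix V V ℝ) (hZ : Z.PosSemidef)
    (horth : (Z * (Xstar C)ᵀ).trace = 0) :
    (Set.range (Z.mulVec) ⊆
        {x : V → ℝ | ∀ l : Fin k, x ⬝ᵥ indFun (C l) = x ⬝ᵥ indFun (C ⟨0, hk⟩)})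
    ∧ ((Xstar C).rank + Z.rank = Fintype.card V ↔
        Set.range (Z.mulVec) =
          {x : V → ℝ | ∀ l : Fin k, x ⬝ᵥ indFun (C l) = x ⬝ᵥ indFun (C ⟨0, hk⟩)}) :=
  stmt3_general hk C hdisj hcover Z hZ horth
end

section
/- Define the block matrix Z* ∈ ℝ^{V×V} whose (C_l, C_l) diagonal block is I/|C_l| and whose (C_i, C_j) off-diagonal block (i≠j) is the all-ones matrix scaled by 1/(|C_i||C_j|). Then the eigenvalues of Z* are: Σ_{l=1}^k 1/|C_l| with multiplicity one, 0 with multiplicity k−1, and 1/|C_l| with multiplicity |C_l|−1 for each l. -/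
/-!
Write `w l = 1 / |C l|` and let `P` be the `V × k` membership matrix of the partition. Then
`x • 1 - Z* = diag (x - w ∘ π) + P (diag w² - w wᵀ) Pᵀ`, and for `x ∉ {0} ∪ {w l}` the
Weinstein–Aronszajn identity turns its determinant into `∏ᵥ (x - w (π v))` times the determinant
of a `k × k` matrix. Since `|C l| • w l = 1`, that matrix is `diag (x / (x - w l))` plus a rank-one
matrix, whose determinant is `∏ₗ x / (x - w l) · (x - ∑ₗ w l) / x`. Multiplying out gives the
characteristic polynomial at all but finitely many points, hence everywhere.
-/

open Matrix

/-- The block matrix `Z*`: diagonal blocks `I/|C_l|`, off-diagonal `(C_i,C_j)` blocks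
all-ones scaled by `1/(|C_i||C_j|)`.  `π` assigns each vertex to its part. -/
noncomputable def Zstar {V : Type*} [Fintype V] [DecidableEq V] {k : ℕ}
    (C : Fin k → Finset V) (π : V → Fin k) : Matrix V V ℝ :=
  Matrix.of fun a b =>
    if π a = π b then (if a = b then ((C (π a)).card : ℝ)⁻¹ else 0)
    else (((C (π a)).card : ℝ) * ((C (π b)).card : ℝ))⁻¹

open Polynomial Finset Function

namespace Matrix

variable {K : Type*} [Field K]

theorem det_diagonal_add_mul {m n : Type*} [Fintype m] [DecidableEq m] [Fintype n]
    [DecidableEq n] {d : m → K} (hd : ∀ i, d i ≠ 0) (U : Matrix m n K) (W : Matrix n m K) :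
    (diagonal d + U * W).det = (∏ i, d i) * (1 + W * diagonal d⁻¹ * U).det := by
  have hinv : (diagonal d)⁻¹ = diagonal d⁻¹ := inv_eq_left_inv <| by
    rw [diagonal_mul_diagonal, ← diagonal_one]
    exact congrArg diagonal (funext fun i => inv_mul_cancel₀ (hd i))
  have hunit : IsUnit (diagonal d).det := by
    simpa [det_diagonal, prod_ne_zero_iff] using hd
  rw [det_add_mul U W hunit, det_diagonal, hinv]

theorem det_diagonal_add_vecMulVec {m : Type*} [Fintype m] [DecidableEq m] {d : m → K}
    (hd : ∀ i, d i ≠ 0) (u v : m → K) :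
    (diagonal d + vecMulVec u v).det = (∏ i, d i) * (1 + ∑ i, u i * v i / d i) := by
  rw [vecMulVec_eq Unit, det_diagonal_add_mul hd, det_unique, add_apply, one_apply_eq,
    Matrix.mul_apply]
  simp only [mul_diagonal, replicateRow_apply, replicateCol_apply, Pi.inv_apply, div_eq_mul_inv]
  congr 2
  exact sum_congr rfl fun i _ => by ring

end Matrix

theorem filter_eq_of_pairwise_disjoint {V ι : Type*} [Fintype V] [DecidableEq ι]
    {C : ι → Finset V} (hdisj : Pairwise (Disjoint on C)) {π : V → ι} (hπ : ∀ v, v ∈ C (π v))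
    (l : ι) : ({v | π v = l} : Finset V) = C l := by
  ext v
  simp only [mem_filter, mem_univ, true_and]
  refine ⟨fun h => h ▸ hπ v, fun hv => ?_⟩
  by_contra h
  exact disjoint_left.mp (hdisj h) (hπ v) hv

section ClusterMatrix

variable (K : Type*) {V ι : Type*} [Field K] [DecidableEq ι]

def membershipMatrix (π : V → ι) : Matrix V ι K := Matrix.of fun v l => if π v = l then 1 else 0

variable {K}

theorem membershipMatrix_mul_mul_transpose_apply [Fintype ι] (π : V → ι) (B : Matrix ι ι K)
    (a b : V) : (membershipMatrix K π * B * (membershipMatrix K π)ᵀ) a b = B (π a) (π b) := by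
  simp [membershipMatrix, Matrix.mul_apply]

theorem transpose_membershipMatrix_mul_diagonal_mul [Fintype V] [DecidableEq V] (π : V → ι)
    (e : ι → K) :
    (membershipMatrix K π)ᵀ * diagonal (fun v => e (π v)) * membershipMatrix K π
      = diagonal fun l => #{v | π v = l} * e l := by
  ext l m
  simp only [membershipMatrix, Matrix.mul_apply, transpose_apply, diagonal_apply, of_apply,
    mul_ite, ite_mul, one_mul, mul_one, mul_zero, zero_mul, sum_ite_eq', mem_univ, if_true]
  rcases eq_or_ne l m with rfl | hlm
  · simp only [if_true, ← sum_filter, filter_filter, and_self]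
    rw [sum_congr rfl fun v hv => by rw [(mem_filter.mp hv).2], sum_const, nsmul_eq_mul]
  · simp only [hlm, if_false]
    exact sum_eq_zero fun v _ => by grind

theorem one_add_diagonal_mul_diagonal_sq_sub_vecMulVec [Fintype ι] {n w : ι → K}
    (hw : ∀ l, n l * w l = 1) {x : K} (hxw : ∀ l, x - w l ≠ 0) :
    1 + diagonal (fun l => n l * (x - w l)⁻¹) * (diagonal (fun l => w l ^ 2) - vecMulVec w w)
      = diagonal (fun l => x / (x - w l)) + vecMulVec (fun l => -(x - w l)⁻¹) w := by
  ext l m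
  rcases eq_or_ne l m with rfl | hlm
  · simp only [Matrix.add_apply, one_apply_eq, diagonal_mul, diagonal_apply_eq, Matrix.sub_apply,
      vecMulVec_apply, sq, sub_self, mul_zero, add_zero]
    field_simp [hxw l]
    ring
  · simp only [Matrix.add_apply, one_apply_ne hlm, diagonal_mul, diagonal_apply_ne _ hlm,
      Matrix.sub_apply,
      vecMulVec_apply, zero_sub, zero_add, mul_neg]
    linear_combination (-(x - w l)⁻¹ * w m) * hw l

variable [DecidableEq V]

def clusterMatrix (π : V → ι) (w : ι → K) : Matrix V V K :=
  Matrix.of fun a b => if π a = π b then (if a = b then w (π a) else 0) else w (π a) * w (π b)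

theorem scalar_sub_clusterMatrix [Fintype V] [Fintype ι] (π : V → ι) (w : ι → K) (x : K) :
    scalar V x - clusterMatrix π w = diagonal (fun v => x - w (π v))
      + membershipMatrix K π * (diagonal (fun l => w l ^ 2) - vecMulVec w w)
        * (membershipMatrix K π)ᵀ := by
  ext a b
  rw [Matrix.add_apply, membershipMatrix_mul_mul_transpose_apply]
  by_cases hab : a = b
  · subst hab
    simp [clusterMatrix, vecMulVec_apply, sq]
  · by_cases hπ : π a = π b <;> simp [clusterMatrix, hab, hπ, vecMulVec_apply, sq]

theorem det_scalar_sub_clusterMatrix [Fintype V] [Fintype ι] [Nonempty ι] (π : V → ι)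
    {w : ι → K} (hw : ∀ l, (#{v | π v = l} : K) * w l = 1) {x : K} (hx : x ≠ 0)
    (hxw : ∀ l, x ≠ w l) :
    (scalar V x - clusterMatrix π w).det
      = (x - ∑ l, w l) * x ^ (Fintype.card ι - 1) * ∏ l, (x - w l) ^ (#{v | π v = l} - 1) := by
  have hxw' : ∀ l, x - w l ≠ 0 := fun l => sub_ne_zero.mpr (hxw l)
  have hprod : ∏ v, (x - w (π v)) = ∏ l, (x - w l) ^ #{v | π v = l} := by
    simp_rw [← prod_fiberwise' univ π fun l => x - w l, prod_const]
  have hblock : ∀ l, (x - w l) ^ #{v | π v = l} * (x / (x - w l))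
      = x * (x - w l) ^ (#{v | π v = l} - 1) := by
    intro l
    obtain ⟨n, hn⟩ : ∃ n, #{v | π v = l} = n + 1 :=
      Nat.exists_eq_succ_of_ne_zero fun h => by simpa [h] using hw l
    rw [hn, Nat.add_sub_cancel, pow_succ]
    field_simp [hxw' l]
  have hsum : 1 + ∑ l, -(x - w l)⁻¹ * w l / (x / (x - w l)) = (x - ∑ l, w l) / x := by
    have hterm : ∀ l, -(x - w l)⁻¹ * w l / (x / (x - w l)) = -(w l / x) := fun l => by
      field_simp [hxw' l]
    rw [sum_congr rfl fun l _ => hterm l, sum_neg_distrib, ← sum_div]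
    field_simp
    ring
  obtain ⟨k, hk⟩ : ∃ k, Fintype.card ι = k + 1 :=
    Nat.exists_eq_succ_of_ne_zero Fintype.card_ne_zero
  rw [scalar_sub_clusterMatrix, det_diagonal_add_mul (fun v => hxw' (π v)), ← Matrix.mul_assoc,
    show (fun v => x - w (π v))⁻¹ = fun v => (x - w (π v))⁻¹ from rfl,
    transpose_membershipMatrix_mul_diagonal_mul π fun l => (x - w l)⁻¹,
    one_add_diagonal_mul_diagonal_sq_sub_vecMulVec hw hxw',
    det_diagonal_add_vecMulVec fun l => div_ne_zero hx (hxw' l), hprod, hsum, ← mul_assoc,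
    ← prod_mul_distrib, prod_congr rfl fun l _ => hblock l, prod_mul_distrib, prod_const,
    card_univ, hk, Nat.add_sub_cancel, pow_succ]
  field_simp

theorem charpoly_clusterMatrix [Infinite K] [Fintype V] [Fintype ι] [Nonempty ι] (π : V → ι)
    {w : ι → K} (hw : ∀ l, (#{v | π v = l} : K) * w l = 1) :
    (clusterMatrix π w).charpoly
      = (X - C (∑ l, w l)) * X ^ (Fintype.card ι - 1)
        * ∏ l, (X - C (w l)) ^ (#{v | π v = l} - 1) := by
  refine eq_of_infinite_eval_eq _ _ <|
    ((Set.finite_singleton 0).union (Set.finite_range w)).infinite_compl.mono fun x hx => ?_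
  simp only [Set.mem_compl_iff, Set.mem_union, Set.mem_singleton_iff, Set.mem_range, not_or,
    not_exists] at hx
  rw [Set.mem_ofPred_eq, eval_charpoly,
    det_scalar_sub_clusterMatrix π hw hx.1 fun l h => hx.2 l h.symm]
  simp only [eval_mul, eval_pow, eval_sub, eval_X, eval_C, eval_prod]

end ClusterMatrix

theorem stmt4 {V : Type*} [Fintype V] [DecidableEq V] {k : ℕ} (hk : 0 < k)
    (C : Fin k → Finset V)
    (hdisj : ∀ i j : Fin k, i ≠ j → Disjoint (C i) (C j))
    (hne : ∀ l : Fin k, (C l).Nonempty)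
    (π : V → Fin k) (hπ : ∀ v : V, v ∈ C (π v)) :
    (Zstar C π).charpoly
      = (Polynomial.X - Polynomial.C (∑ l : Fin k, (((C l).card : ℝ))⁻¹))
        * Polynomial.X ^ (k - 1)
        * ∏ l : Fin k,
            (Polynomial.X - Polynomial.C (((C l).card : ℝ)⁻¹)) ^ ((C l).card - 1) := by
  have hfiber := filter_eq_of_pairwise_disjoint (fun i j => hdisj i j) hπ
  have hZ : Zstar C π = clusterMatrix π fun l => ((C l).card : ℝ)⁻¹ := by
    ext a b
    simp only [Zstar, clusterMatrix, of_apply, mul_inv]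
  have hw : ∀ l, (#{v | π v = l} : ℝ) * ((C l).card : ℝ)⁻¹ = 1 := fun l => by
    rw [hfiber]
    exact mul_inv_cancel₀ (Nat.cast_ne_zero.mpr (hne l).card_ne_zero)
  have : Nonempty (Fin k) := ⟨⟨0, hk⟩⟩
  rw [hZ, charpoly_clusterMatrix π hw, Fintype.card_fin]
  simp only [hfiber]
end

section
/- With Z* the block matrix whose (C_l,C_l) blocks are I/|C_l| and (C_i,C_j) blocks are E/(|C_i||C_j|) for i≠j, the range of Z* equals J = {x ∈ ℝ^V : ⟨x, 1_{C_1}⟩ = ... = ⟨x, 1_{C_k}⟩}; in particular Z* is positive semidefinite of rank |V| − k + 1. -/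
/-!
Write `n_l = |C_l|` and `u_l(x)` for the mean of `x` over `C_l`. A direct computation gives
`(Z* x)_a = (x_a - u_l(x) + ∑ⱼ uⱼ(x)) / n_l` for `a ∈ C_l`. Summing over `C_l` shows that every
block sum of `Z* x` equals `∑ⱼ uⱼ(x)`, so the range lies in `J`; conversely `x ∈ J` with common
block sum `T` is hit by `y_a = n_l x_a - T + T/k`. Multiplying by `x_a` and summing gives
`xᵀ Z* x = ∑_l n_l⁻¹ ∑_{a ∈ C_l} x_a (x_a - u_l) + (∑ⱼ uⱼ)²`, and each inner sum equals
`∑_{a ∈ C_l} (x_a - u_l)² ≥ 0`.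
For the rank, `J` is the kernel of the surjection `x ↦ (∑_{C_l} x - ∑_{C_1} x)_{l ≠ 1}` onto `ℝ^{k-1}`.
-/

open Matrix

open Finset

theorem Finset.sum_mul_sub_sum_div_card_nonneg {ι : Type*} (s : Finset ι) (x : ι → ℝ) :
    0 ≤ ∑ i ∈ s, x i * (x i - (∑ j ∈ s, x j) / #s) := by
  rcases s.eq_empty_or_nonempty with rfl | hs
  · simp
  have hcard : (0 : ℝ) < #s := by exact_mod_cast hs.card_pos
  simp only [mul_sub, sum_sub_distrib, ← sum_mul, ← sq]
  rw [mul_div_assoc', ← sq, sub_nonneg, div_le_iff₀ hcard, mul_comm]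
  exact sq_sum_le_card_mul_sum_sq

section Partition

variable {V : Type*} {k : ℕ} {C : Fin k → Finset V} {π : V → Fin k}

theorem mem_iff_of_disjoint (hdisj : ∀ i j : Fin k, i ≠ j → Disjoint (C i) (C j))
    (hπ : ∀ v : V, v ∈ C (π v)) {v : V} {l : Fin k} : v ∈ C l ↔ π v = l := by
  refine ⟨fun hv => ?_, fun h => h ▸ hπ v⟩
  by_contra h
  exact disjoint_left.mp (hdisj _ _ h) (hπ v) hv

theorem sum_eq_sum_sum_of_mem_iff [Fintype V] (hC : ∀ v l, v ∈ C l ↔ π v = l)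
    {M : Type*} [AddCommMonoid M] (f : V → M) : ∑ v, f v = ∑ l, ∑ v ∈ C l, f v := by
  rw [← sum_fiberwise univ π f]
  congr! 2 with l
  ext v
  simp [hC]

noncomputable def blockMean (C : Fin k → Finset V) (x : V → ℝ) (l : Fin k) : ℝ :=
  (∑ v ∈ C l, x v) / #(C l)

noncomputable def blockSumDiff (C : Fin k → Finset V) (i₀ : Fin k) :
    (V → ℝ) →ₗ[ℝ] ({l // l ≠ i₀} → ℝ) where
  toFun x l := ∑ v ∈ C l, x v - ∑ v ∈ C i₀, x v
  map_add' x y := by ext l; simp only [Pi.add_apply, sum_add_distrib]; ring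
  map_smul' c x := by
    ext l; simp only [Pi.smul_apply, smul_eq_mul, ← mul_sum, RingHom.id_apply]; ring

theorem mem_ker_blockSumDiff {i₀ : Fin k} {x : V → ℝ} :
    x ∈ LinearMap.ker (blockSumDiff C i₀) ↔ ∀ l, ∑ v ∈ C l, x v = ∑ v ∈ C i₀, x v := by
  simp only [LinearMap.mem_ker, funext_iff, blockSumDiff, LinearMap.coe_mk, AddHom.coe_mk,
    Pi.zero_apply, sub_eq_zero, Subtype.forall]
  exact ⟨fun h l => if hl : l = i₀ then hl ▸ rfl else h l hl, fun h l _ => h l⟩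

theorem blockSumDiff_surjective (hC : ∀ v l, v ∈ C l ↔ π v = l) (hne : ∀ l, (C l).Nonempty)
    (i₀ : Fin k) : Function.Surjective (blockSumDiff C i₀) := by
  intro t
  set t' : Fin k → ℝ := fun l => if h : l = i₀ then 0 else t ⟨l, h⟩
  have hsum (l : Fin k) : ∑ v ∈ C l, t' (π v) / #(C (π v)) = t' l := by
    have hl : (#(C l) : ℝ) ≠ 0 := Nat.cast_ne_zero.2 (hne l).card_ne_zero
    rw [sum_congr rfl fun v hv => by rw [(hC v l).1 hv], sum_const, nsmul_eq_mul]
    field_simp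
  refine ⟨fun v => t' (π v) / #(C (π v)), funext fun l => ?_⟩
  simp only [blockSumDiff, LinearMap.coe_mk, AddHom.coe_mk, hsum]
  simp [t', l.2]

end Partition

namespace Zstar

variable {V : Type*} [Fintype V] [DecidableEq V] {k : ℕ} {C : Fin k → Finset V} {π : V → Fin k}

theorem isHermitian : (Zstar C π).IsHermitian := by
  ext a b
  simp only [conjTranspose_apply, star_trivial, Zstar, of_apply, eq_comm (a := a), mul_comm]
  split_ifs with h <;> simp_all

variable (hC : ∀ v l, v ∈ C l ↔ π v = l)
include hC

theorem mulVec_apply (x : V → ℝ) (a : V) :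
    (Zstar C π *ᵥ x) a
      = (#(C (π a)) : ℝ)⁻¹ * (x a - blockMean C x (π a) + ∑ l, blockMean C x l) := by
  have block (l : Fin k) : ∑ b ∈ C l, Zstar C π a b * x b
      = (#(C (π a)) : ℝ)⁻¹ * (blockMean C x l + if π a = l then x a - blockMean C x l else 0) := by
    by_cases h : π a = l
    · subst h
      have hab (b) (hb : b ∈ C (π a)) :
          Zstar C π a b * x b = if a = b then (#(C (π a)) : ℝ)⁻¹ * x a else 0 := by
        simp only [Zstar, of_apply, (hC b _).1 hb, if_true]
        split_ifs with hab
        · rw [hab]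
        · rw [zero_mul]
      rw [sum_congr rfl hab, sum_ite_eq, if_pos ((hC a _).2 rfl), if_pos rfl]
      ring
    · have hab (b) (hb : b ∈ C l) :
          Zstar C π a b * x b = (#(C (π a)) : ℝ)⁻¹ * ((#(C l) : ℝ)⁻¹ * x b) := by
        simp only [Zstar, of_apply, (hC b l).1 hb, if_neg h, mul_inv]
        ring
      rw [sum_congr rfl hab, ← mul_sum, ← mul_sum, blockMean, if_neg h, inv_mul_eq_div]
      ring
  rw [mulVec, dotProduct, sum_eq_sum_sum_of_mem_iff hC, sum_congr rfl fun l _ => block l,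
    ← mul_sum, sum_add_distrib, sum_ite_eq]
  simp only [mem_univ, if_true]
  ring

theorem dotProduct_mulVec_self (x : V → ℝ) :
    x ⬝ᵥ (Zstar C π *ᵥ x)
      = ∑ l, (#(C l) : ℝ)⁻¹ * ∑ a ∈ C l, x a * (x a - blockMean C x l)
        + (∑ l, blockMean C x l) ^ 2 := by
  set M := ∑ l, blockMean C x l
  have block (l : Fin k) : ∑ a ∈ C l, x a * (Zstar C π *ᵥ x) a
      = (#(C l) : ℝ)⁻¹ * ∑ a ∈ C l, x a * (x a - blockMean C x l) + blockMean C x l * M := by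
    calc ∑ a ∈ C l, x a * (Zstar C π *ᵥ x) a
        = ∑ a ∈ C l, ((#(C l) : ℝ)⁻¹ * (x a * (x a - blockMean C x l))
            + (#(C l) : ℝ)⁻¹ * x a * M) :=
          sum_congr rfl fun a ha => by rw [mulVec_apply hC, (hC a l).1 ha]; ring
      _ = _ := by rw [sum_add_distrib, ← mul_sum, ← sum_mul, ← mul_sum, blockMean, div_eq_inv_mul]
  rw [dotProduct, sum_eq_sum_sum_of_mem_iff hC, sum_congr rfl fun l _ => block l, sum_add_distrib,
    ← sum_mul, sq]

theorem posSemidef : (Zstar C π).PosSemidef := by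
  refine PosSemidef.of_dotProduct_mulVec_nonneg isHermitian fun x => ?_
  rw [star_trivial, dotProduct_mulVec_self hC]
  exact add_nonneg (sum_nonneg fun l _ => mul_nonneg (by positivity)
    (sum_mul_sub_sum_div_card_nonneg (C l) x)) (sq_nonneg _)

variable (hne : ∀ l, (C l).Nonempty)
include hne

theorem sum_mulVec_eq_sum_blockMean (x : V → ℝ) (l : Fin k) :
    ∑ a ∈ C l, (Zstar C π *ᵥ x) a = ∑ j, blockMean C x j := by
  have hl : (#(C l) : ℝ) ≠ 0 := Nat.cast_ne_zero.2 (hne l).card_ne_zero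
  have hrow (a) (ha : a ∈ C l) : (Zstar C π *ᵥ x) a
      = (#(C l) : ℝ)⁻¹ * (x a - blockMean C x l + ∑ j, blockMean C x j) := by
    rw [mulVec_apply hC, (hC a l).1 ha]
  rw [sum_congr rfl hrow, ← mul_sum, sum_add_distrib, sum_sub_distrib, sum_const, sum_const,
    nsmul_eq_mul, nsmul_eq_mul, blockMean]
  field_simp
  ring

theorem range_mulVec (i₀ : Fin k) :
    Set.range (Zstar C π).mulVec = {x | ∀ l, ∑ v ∈ C l, x v = ∑ v ∈ C i₀, x v} := by
  ext x
  constructor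
  · rintro ⟨y, rfl⟩ l
    rw [sum_mulVec_eq_sum_blockMean hC hne, sum_mulVec_eq_sum_blockMean hC hne]
  · intro hx
    set T := ∑ v ∈ C i₀, x v
    have hk : (k : ℝ) ≠ 0 := by exact_mod_cast i₀.pos.ne'
    set y : V → ℝ := fun a => #(C (π a)) * x a - T + T / k
    have hmean (l : Fin k) : blockMean C y l = T / k := by
      have hl : (#(C l) : ℝ) ≠ 0 := Nat.cast_ne_zero.2 (hne l).card_ne_zero
      have hy (a) (ha : a ∈ C l) : y a = #(C l) * x a - T + T / k := by simp [y, (hC a l).1 ha]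
      rw [blockMean, sum_congr rfl hy, sum_add_distrib, sum_sub_distrib, ← mul_sum, hx l,
        sum_const, sum_const, nsmul_eq_mul, nsmul_eq_mul]
      field_simp
      ring
    refine ⟨y, funext fun a => ?_⟩
    have ha : (#(C (π a)) : ℝ) ≠ 0 := Nat.cast_ne_zero.2 (hne _).card_ne_zero
    rw [mulVec_apply hC, hmean, sum_congr rfl fun l _ => hmean l, sum_const, card_univ,
      Fintype.card_fin, nsmul_eq_mul]
    simp only [y]
    field_simp
    ring

theorem rank_eq_card_sub_add_one (i₀ : Fin k) : (Zstar C π).rank = Fintype.card V - k + 1 := by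
  have hrange : LinearMap.range (Zstar C π).mulVecLin = LinearMap.ker (blockSumDiff C i₀) := by
    refine SetLike.coe_injective ?_
    rw [LinearMap.coe_range, coe_mulVecLin, range_mulVec hC hne i₀]
    ext x
    exact mem_ker_blockSumDiff.symm
  have hdim := LinearMap.finrank_range_add_finrank_ker (blockSumDiff C i₀)
  rw [LinearMap.range_eq_top.2 (blockSumDiff_surjective hC hne i₀), finrank_top,
    Module.finrank_fintype_fun_eq_card, Module.finrank_fintype_fun_eq_card,
    Fintype.card_subtype_compl, Fintype.card_subtype_eq, Fintype.card_fin] at hdim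
  have hk : k ≤ Fintype.card V := by
    simpa using Fintype.card_le_of_surjective π fun l => (hne l).imp fun v hv => (hC v l).1 hv
  have hk₀ := i₀.pos
  rw [rank, hrange]
  omega

end Zstar

theorem stmt5 {V : Type*} [Fintype V] [DecidableEq V] {k : ℕ} (hk : 0 < k)
    (C : Fin k → Finset V)
    (hdisj : ∀ i j : Fin k, i ≠ j → Disjoint (C i) (C j))
    (hne : ∀ l : Fin k, (C l).Nonempty)
    (π : V → Fin k) (hπ : ∀ v : V, v ∈ C (π v)) :
    (Set.range ((Zstar C π).mulVec) =
        {x : V → ℝ | ∀ l : Fin k, x ⬝ᵥ (fun v => if v ∈ C l then (1:ℝ) else 0)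
          = x ⬝ᵥ (fun v => if v ∈ C ⟨0, hk⟩ then (1:ℝ) else 0)})
    ∧ (Zstar C π).PosSemidef
    ∧ (Zstar C π).rank = Fintype.card V - k + 1 := by
  have hC : ∀ v l, v ∈ C l ↔ π v = l := fun _ _ => mem_iff_of_disjoint hdisj hπ
  refine ⟨?_, Zstar.posSemidef hC, Zstar.rank_eq_card_sub_add_one hC hne ⟨0, hk⟩⟩
  simpa [dotProduct] using Zstar.range_mulVec hC hne ⟨0, hk⟩
end

section
/- Let Z* be as above and let S ⊆ V be a set of vertices such that for all but at most one index l, the set S omits at least one vertex of C_l (i.e., |S ∩ C_l| ≤ |C_l| − 1 for all l except possibly one). Then the columns of Z* indexed by S are linearly independent. -/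
open Matrix

theorem stmt6 {V : Type*} [Fintype V] [DecidableEq V] {k : ℕ} (hk : 0 < k)
    (C : Fin k → Finset V)
    (hdisj : ∀ i j : Fin k, i ≠ j → Disjoint (C i) (C j))
    (hne : ∀ l : Fin k, (C l).Nonempty)
    (π : V → Fin k) (hπ : ∀ v : V, v ∈ C (π v))
    (S : Finset V)
    (hS : ∃ l₀ : Fin k, ∀ l : Fin k, l ≠ l₀ → (S ∩ C l).card < (C l).card) :
    LinearIndependent ℝ (fun j : {v // v ∈ S} => fun i : V => Zstar C π i j) := by
  obtain ⟨l₀, hl₀⟩ := hS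
  rw [Fintype.linearIndependent_iff]
  intro g hg
  set c : V → ℝ := fun v => if h : v ∈ S then g ⟨v, h⟩ else 0 with hc
  have hn : ∀ l, ((C l).card : ℝ) ≠ 0 := by
    intro l
    have := Finset.card_pos.mpr (hne l)
    positivity
  have hπl : ∀ {a : V} {l : Fin k}, a ∈ C l → π a = l := by
    intro a l ha
    by_contra h
    exact Finset.disjoint_left.1 (hdisj _ _ h) (hπ a) ha
  -- key row equation
  have key : ∀ a : V, (if a ∈ S then c a else 0)
      + ∑ b ∈ S.filter (fun b => π b ≠ π a), c b * ((C (π b)).card : ℝ)⁻¹ = 0 := by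
    intro a
    have h1 := congrFun hg a
    simp only [Finset.sum_apply, Pi.smul_apply, smul_eq_mul, Pi.zero_apply] at h1
    have h2 : ∑ b ∈ S, c b * Zstar C π a b = 0 := by
      rw [← Finset.sum_attach S (fun b => c b * Zstar C π a b), ← h1]
      refine Finset.sum_congr (Finset.univ_eq_attach S).symm ?_
      intro j _
      simp [hc, j.2]
    have split : ∀ b : V, c b * Zstar C π a b =
        (if a = b then c b * ((C (π a)).card : ℝ)⁻¹ else 0)
        + (if π b ≠ π a then
            c b * (((C (π a)).card : ℝ)⁻¹ * ((C (π b)).card : ℝ)⁻¹) else 0) := by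
      intro b
      simp only [Zstar, Matrix.of_apply]
      by_cases hab : a = b
      · subst hab; simp
      · by_cases hp : π a = π b
        · rw [if_pos hp, if_neg hab, mul_zero, if_neg hab,
            if_neg (not_not_intro hp.symm), add_zero]
        · have hp' : π b ≠ π a := fun h => hp h.symm
          rw [if_neg hp, if_neg hab, if_pos hp', zero_add, mul_inv]
    rw [Finset.sum_congr rfl (fun b _ => split b), Finset.sum_add_distrib,
      Finset.sum_ite_eq] at h2
    have hfac : ∑ b ∈ S, (if π b ≠ π a then
        c b * (((C (π a)).card : ℝ)⁻¹ * ((C (π b)).card : ℝ)⁻¹) else 0)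
        = ((C (π a)).card : ℝ)⁻¹ *
          ∑ b ∈ S.filter (fun b => π b ≠ π a), c b * ((C (π b)).card : ℝ)⁻¹ := by
      rw [← Finset.sum_filter, Finset.mul_sum]
      exact Finset.sum_congr rfl (fun b _ => by ring)
    rw [hfac] at h2
    have e : ((C (π a)).card : ℝ)⁻¹ * (if a ∈ S then c a else 0)
        = (if a ∈ S then c a * ((C (π a)).card : ℝ)⁻¹ else 0) := by
      split <;> ring
    have h4 : ((C (π a)).card : ℝ)⁻¹ * ((if a ∈ S then c a else 0)
        + ∑ b ∈ S.filter (fun b => π b ≠ π a), c b * ((C (π b)).card : ℝ)⁻¹) = 0 := by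
      rw [mul_add, e]
      exact h2
    rcases mul_eq_zero.mp h4 with h | h
    · exact absurd h (inv_ne_zero (hn _))
    · exact h
  -- step 1 : coefficients vanish outside part l₀
  have step1 : ∀ b ∈ S, π b ≠ l₀ → c b = 0 := by
    intro b hb hbl
    have hlt := hl₀ (π b) hbl
    have hex : ∃ a ∈ C (π b), a ∉ S := by
      by_contra h
      push_neg at h
      have hsub : C (π b) ⊆ S := h
      have : S ∩ C (π b) = C (π b) := Finset.inter_eq_right.mpr hsub
      rw [this] at hlt
      exact lt_irrefl _ hlt
    obtain ⟨a, haC, haS⟩ := hex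
    have hπa : π a = π b := hπl haC
    have k1 := key a
    rw [if_neg haS, hπa, zero_add] at k1
    have k2 := key b
    rw [if_pos hb, k1, add_zero] at k2
    exact k2
  -- step 2 : all coefficients vanish
  have step2 : ∀ b ∈ S, c b = 0 := by
    intro b hb
    by_cases hbl : π b = l₀
    · have hu : ∑ x ∈ S.filter (fun x => π x ≠ π b), c x * ((C (π x)).card : ℝ)⁻¹ = 0 := by
        apply Finset.sum_eq_zero
        intro x hx
        rw [Finset.mem_filter] at hx
        rw [step1 x hx.1 (hbl ▸ hx.2)]
        ring
      have k := key b
      rw [if_pos hb, hu, add_zero] at k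
      exact k
    · exact step1 b hb hbl
  intro j
  have := step2 j.1 j.2
  simpa [hc, j.2] using this
end

section
/- Let G be a graph with clique cover {C_l}_{l=1}^k satisfying the c-SCC property for some c < 1 (every vertex v and every clique C_l not containing v satisfy |e(v,C_l)| ≤ c|C_l|, where e(v,C_l) is the set of edges from v to C_l). Then the collection of matrices {E_{ij} Z* : (i,j) ∈ E(G)} ∪ {Z*}, where E_{ij} = (e_i e_j^T + e_j e_i^T)/2, is linearly independent. -/
open Matrix

lemma zstar_row_ker {V : Type*} [Fintype V] [DecidableEq V] {k : ℕ}
    (C : Fin k → Finset V) (π : V → Fin k) (hne : ∀ l, (C l).Nonempty)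
    (x : V → ℝ) (hx : ∀ b, ∑ c, x c * Zstar C π c b = 0) (b : V) :
    x b = -∑ c ∈ Finset.univ.filter (fun c => π c ≠ π b),
              x c * ((C (π c)).card : ℝ)⁻¹ := by
  have hb := hx b
  rw [← Finset.sum_filter_add_sum_filter_not Finset.univ (fun c => π c = π b)] at hb
  have h1 : ∑ c ∈ Finset.univ.filter (fun c => π c = π b), x c * Zstar C π c b
      = x b * ((C (π b)).card : ℝ)⁻¹ := by
    have hbmem : b ∈ Finset.univ.filter (fun c => π c = π b) :=
      Finset.mem_filter.mpr ⟨Finset.mem_univ b, rfl⟩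
    rw [Finset.sum_eq_single_of_mem b hbmem
      (fun c hc hcb => by simp [Zstar, (Finset.mem_filter.mp hc).2, hcb])]
    simp [Zstar]
  have h2 : ∑ c ∈ Finset.univ.filter (fun c => ¬ π c = π b), x c * Zstar C π c b
      = (∑ c ∈ Finset.univ.filter (fun c => π c ≠ π b),
          x c * ((C (π c)).card : ℝ)⁻¹) * ((C (π b)).card : ℝ)⁻¹ := by
    rw [Finset.sum_mul]
    refine Finset.sum_congr rfl fun c hc => ?_
    have hcb : ¬ π c = π b := (Finset.mem_filter.mp hc).2
    simp only [Zstar, Matrix.of_apply, if_neg hcb, mul_inv]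
    ring
  rw [h1, h2, ← add_mul] at hb
  have hpos : (0:ℝ) < ((C (π b)).card : ℝ) := by
    exact_mod_cast Finset.card_pos.mpr (hne _)
  rcases mul_eq_zero.mp hb with h | h
  · linarith
  · exact absurd h (inv_ne_zero (ne_of_gt hpos))

/-- The matrix `E_{ij} = (e_i e_jᵀ + e_j e_iᵀ)/2` associated to an (unordered) edge. -/
noncomputable def Emat {V : Type*} [DecidableEq V] (e : Sym2 V) : Matrix V V ℝ :=
  Matrix.of fun a b => if s(a, b) = e then (1 / 2 : ℝ) else 0

theorem stmt7 {V : Type*} [Fintype V] [DecidableEq V] {k : ℕ} (hk : 0 < k)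
    (G : SimpleGraph V) [DecidableRel G.Adj]
    (C : Fin k → Finset V)
    (hdisj : ∀ i j : Fin k, i ≠ j → Disjoint (C i) (C j))
    (hne : ∀ l : Fin k, (C l).Nonempty)
    (π : V → Fin k) (hπ : ∀ v : V, v ∈ C (π v))
    (hclique : ∀ l : Fin k, G.IsClique (C l : Set V))
    (c : ℝ) (hc : c < 1)
    (hscc : ∀ v : V, ∀ l : Fin k, v ∉ C l →
      (((C l).filter (fun w => G.Adj v w)).card : ℝ) ≤ c * (C l).card) :
    LinearIndependent ℝ
      (fun o : Option {e // e ∈ G.edgeFinset} =>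
        Option.elim o (Zstar C π) (fun e => Emat e.1 * Zstar C π)) := by
  rw [Fintype.linearIndependent_iff]
  intro g hg
  -- the coefficient matrix
  set M : Matrix V V ℝ :=
    g none • (1 : Matrix V V ℝ) + ∑ e : {e // e ∈ G.edgeFinset}, g (some e) • Emat e.1
    with hMdef
  have hM : M * Zstar C π = 0 := by
    rw [hMdef, add_mul, Finset.sum_mul]
    rw [Fintype.sum_option] at hg
    simp only [Option.elim] at hg
    simpa [smul_mul_assoc, Matrix.one_mul] using hg
  have hrow : ∀ a b, ∑ cc, M a cc * Zstar C π cc b = 0 := by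
    intro a b
    have h := congrFun (congrFun hM a) b
    rwa [Matrix.mul_apply, Matrix.zero_apply] at h
  -- entries of M
  have hMdiag : ∀ a, M a a = g none := by
    intro a
    simp only [hMdef, Matrix.add_apply, Matrix.smul_apply, Matrix.one_apply_eq,
      smul_eq_mul, mul_one, Matrix.sum_apply]
    have : ∀ e : {e // e ∈ G.edgeFinset}, g (some e) * Emat e.1 a a = 0 := by
      intro e
      have hd : ¬ (e.1).IsDiag := G.not_isDiag_of_mem_edgeSet (SimpleGraph.mem_edgeFinset.mp e.2)
      have : ¬ s(a, a) = e.1 := fun h => hd (h ▸ Sym2.mk_isDiag_iff.mpr rfl)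
      simp [Emat, this]
    rw [Finset.sum_eq_zero (fun e _ => this e), add_zero]
  have hMoff : ∀ a b, a ≠ b → ¬ G.Adj a b → M a b = 0 := by
    intro a b hab hadj
    simp only [hMdef, Matrix.add_apply, Matrix.smul_apply, Matrix.one_apply_ne hab,
      smul_eq_mul, mul_zero, Matrix.sum_apply, zero_add]
    refine Finset.sum_eq_zero fun e _ => ?_
    have : ¬ s(a, b) = e.1 := by
      intro h
      exact hadj (G.mem_edgeSet.mp (h ▸ (SimpleGraph.mem_edgeFinset.mp e.2)))
    simp [Emat, this]
  have hMadj : ∀ a b (h : G.Adj a b),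
      M a b = g (some ⟨s(a, b), SimpleGraph.mem_edgeFinset.mpr (G.mem_edgeSet.mpr h)⟩) * (1/2) := by
    intro a b h
    simp only [hMdef, Matrix.add_apply, Matrix.smul_apply, Matrix.one_apply_ne h.ne,
      smul_eq_mul, mul_zero, Matrix.sum_apply, zero_add]
    rw [Finset.sum_eq_single_of_mem
      (⟨s(a, b), SimpleGraph.mem_edgeFinset.mpr (G.mem_edgeSet.mpr h)⟩ : {e // e ∈ G.edgeFinset})
      (Finset.mem_univ _)
      (fun e _ hne' => by
        have : ¬ s(a, b) = e.1 := fun hh => hne' (Subtype.ext hh.symm)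
        simp [Emat, this])]
    simp [Emat]
  -- constancy of rows on blocks
  have hconst : ∀ a b b', π b = π b' → M a b = M a b' := by
    intro a b b' h
    rw [zstar_row_ker C π hne (M a) (hrow a) b, zstar_row_ker C π hne (M a) (hrow a) b', h]
  -- membership forces π
  have hmem : ∀ v l, v ∈ C l → π v = l := by
    intro v l hv
    by_contra h
    exact (Finset.disjoint_left.mp (hdisj _ _ h) (hπ v)) hv
  -- existence of a non-neighbor in a foreign clique
  have hnonnbr : ∀ a l, a ∉ C l → ∃ w ∈ C l, ¬ G.Adj a w := by
    intro a l ha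
    by_contra h
    push_neg at h
    have hfil : (C l).filter (fun w => G.Adj a w) = C l :=
      Finset.filter_eq_self.mpr h
    have h2 := hscc a l ha
    rw [hfil] at h2
    have hn : (0:ℝ) < (C l).card := by exact_mod_cast Finset.card_pos.mpr (hne l)
    nlinarith
  -- cross-block entries vanish
  have hcross : ∀ a cc, π cc ≠ π a → M a cc = 0 := by
    intro a cc hccne
    have haC : a ∉ C (π cc) := fun h => hccne (hmem a _ h).symm
    obtain ⟨w, hw, hnadj⟩ := hnonnbr a (π cc) haC
    have hwπ : π w = π cc := hmem w _ hw
    rw [hconst a cc w hwπ.symm]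
    exact hMoff a w (fun h => haC (h ▸ hw)) hnadj
  -- the coefficient of Zstar vanishes
  obtain ⟨v0, hv0⟩ := hne ⟨0, hk⟩
  have hα : g none = 0 := by
    have h := zstar_row_ker C π hne (M v0) (hrow v0) v0
    rw [hMdiag v0] at h
    rw [h, Finset.sum_eq_zero, neg_zero]
    intro cc hcc
    rw [hcross v0 cc (Finset.mem_filter.mp hcc).2, zero_mul]
  intro o
  match o with
  | none => exact hα
  | some e =>
    obtain ⟨e, he⟩ := e
    induction e using Sym2.ind with
    | _ u w =>
      have hadj : G.Adj u w := G.mem_edgeSet.mp (SimpleGraph.mem_edgeFinset.mp he)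
      have h2 : M u w = g (some ⟨s(u, w), he⟩) * (1/2) := hMadj u w hadj
      by_cases hπuw : π u = π w
      · have h3 : M u w = M u u := hconst u w u hπuw.symm
        rw [h3, hMdiag, hα] at h2
        linarith
      · have h3 : M u w = 0 := hcross u w (fun h => hπuw h.symm)
        rw [h3] at h2
        linarith
end

section
/- Let K ∈ ℝ^{n1×n2} be a matrix each of whose rows has at most c·n2 nonzero entries, for some 0 ≤ c ≤ 1. Let L ∈ ℝ^{n1×n2} be any matrix with constant rows (i.e., L_{x,y} = θ_x for all y). Then |⟨K, L⟩| ≤ √c · ‖K‖_F · ‖L‖_F, where ⟨·,·⟩ is the trace (Frobenius) inner product. -/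
open Matrix Finset

/-- Frobenius inner product of two matrices. -/
def frobInner {n₁ n₂ : ℕ} (K L : Matrix (Fin n₁) (Fin n₂) ℝ) : ℝ :=
  ∑ x : Fin n₁, ∑ y : Fin n₂, K x y * L x y

/-- Frobenius norm of a matrix. -/
noncomputable def frobNorm {n₁ n₂ : ℕ} (K : Matrix (Fin n₁) (Fin n₂) ℝ) : ℝ :=
  Real.sqrt (∑ x : Fin n₁, ∑ y : Fin n₂, (K x y) ^ 2)

theorem stmt9 {n₁ n₂ : ℕ} (K L : Matrix (Fin n₁) (Fin n₂) ℝ)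
    (c : ℝ) (hc0 : 0 ≤ c) (hc1 : c ≤ 1)
    (hrow : ∀ x : Fin n₁,
      ((univ.filter fun y : Fin n₂ => K x y ≠ 0).card : ℝ) ≤ c * n₂)
    (hL : ∀ (x : Fin n₁) (y y' : Fin n₂), L x y = L x y') :
    |frobInner K L| ≤ Real.sqrt c * frobNorm K * frobNorm L := by
  set A := ∑ x : Fin n₁, ∑ y : Fin n₂, (K x y) ^ 2 with hAdef
  set B := ∑ x : Fin n₁, ∑ y : Fin n₂, (L x y) ^ 2 with hBdef
  have hA : 0 ≤ A := by positivity
  have hB : 0 ≤ B := by positivity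
  have key : (frobInner K L) ^ 2 ≤ c * A * B := by
    rcases Nat.eq_zero_or_pos n₂ with h0 | hpos
    · subst h0
      have h1 : frobInner K L = 0 := by simp [frobInner]
      have h2 : A = 0 := by simp [hAdef]
      simp [h1, h2]
    · set y₀ : Fin n₂ := ⟨0, hpos⟩
      have hLrow : ∀ x y, L x y = L x y₀ := fun x y => hL x y y₀
      have hBeq : B = (n₂ : ℝ) * ∑ x : Fin n₁, (L x y₀) ^ 2 := by
        rw [hBdef, Finset.mul_sum]
        refine Finset.sum_congr rfl fun x _ => ?_
        rw [Finset.sum_congr rfl fun y _ => by rw [hLrow x y]]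
        simp [mul_comm]
      have hFrob : frobInner K L = ∑ x : Fin n₁, (∑ y : Fin n₂, K x y) * L x y₀ := by
        unfold frobInner
        refine Finset.sum_congr rfl fun x _ => ?_
        rw [Finset.sum_mul]
        exact Finset.sum_congr rfl fun y _ => by rw [hLrow x y]
      -- per-row bound
      have hrowsq : ∀ x : Fin n₁,
          (∑ y : Fin n₂, K x y) ^ 2 ≤ c * n₂ * ∑ y : Fin n₂, (K x y) ^ 2 := by
        intro x
        set S := univ.filter fun y : Fin n₂ => K x y ≠ 0 with hS
        have hsum : ∑ y : Fin n₂, K x y = ∑ y ∈ S, K x y :=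
          (Finset.sum_filter_ne_zero univ).symm
        have hcs : (∑ y ∈ S, K x y) ^ 2 ≤ (∑ y ∈ S, (1:ℝ) ^ 2) * ∑ y ∈ S, (K x y) ^ 2 := by
          have := Finset.sum_mul_sq_le_sq_mul_sq S (fun _ => (1:ℝ)) (fun y => K x y)
          simpa using this
        have hcard : (∑ y ∈ S, (1:ℝ) ^ 2) = (S.card : ℝ) := by simp
        have hsub : ∑ y ∈ S, (K x y) ^ 2 ≤ ∑ y : Fin n₂, (K x y) ^ 2 :=
          Finset.sum_le_sum_of_subset_of_nonneg (Finset.filter_subset _ _)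
            (fun i _ _ => sq_nonneg _)
        have hKsq : 0 ≤ ∑ y ∈ S, (K x y) ^ 2 :=
          Finset.sum_nonneg fun i _ => sq_nonneg _
        calc (∑ y : Fin n₂, K x y) ^ 2 = (∑ y ∈ S, K x y) ^ 2 := by rw [hsum]
          _ ≤ (S.card : ℝ) * ∑ y ∈ S, (K x y) ^ 2 := by rw [hcard] at hcs; exact hcs
          _ ≤ (c * n₂) * ∑ y ∈ S, (K x y) ^ 2 :=
              mul_le_mul_of_nonneg_right (hrow x) hKsq
          _ ≤ (c * n₂) * ∑ y : Fin n₂, (K x y) ^ 2 :=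
              mul_le_mul_of_nonneg_left hsub (by positivity)
      have ht : ∑ x : Fin n₁, (∑ y : Fin n₂, K x y) ^ 2 ≤ c * n₂ * A := by
        rw [hAdef, Finset.mul_sum]
        exact Finset.sum_le_sum fun x _ => hrowsq x
      have hcs2 : (frobInner K L) ^ 2 ≤
          (∑ x : Fin n₁, (∑ y : Fin n₂, K x y) ^ 2) * ∑ x : Fin n₁, (L x y₀) ^ 2 := by
        rw [hFrob]
        exact Finset.sum_mul_sq_le_sq_mul_sq univ _ _
      have hθ : 0 ≤ ∑ x : Fin n₁, (L x y₀) ^ 2 :=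
        Finset.sum_nonneg fun i _ => sq_nonneg _
      calc (frobInner K L) ^ 2
          ≤ (∑ x : Fin n₁, (∑ y : Fin n₂, K x y) ^ 2) * ∑ x : Fin n₁, (L x y₀) ^ 2 := hcs2
        _ ≤ (c * n₂ * A) * ∑ x : Fin n₁, (L x y₀) ^ 2 :=
            mul_le_mul_of_nonneg_right ht hθ
        _ = c * A * B := by rw [hBeq]; ring
  have h1 : |frobInner K L| = Real.sqrt ((frobInner K L) ^ 2) :=
    (Real.sqrt_sq_eq_abs _).symm
  rw [h1, frobNorm, frobNorm, ← hAdef, ← hBdef]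
  calc Real.sqrt ((frobInner K L) ^ 2) ≤ Real.sqrt (c * A * B) := Real.sqrt_le_sqrt key
    _ = Real.sqrt c * Real.sqrt A * Real.sqrt B := by
        rw [Real.sqrt_mul (by positivity), Real.sqrt_mul hc0]
end

section
/- Let K ∈ ℝ^{n1×n2} have at most c·n1 nonzero entries in each column and at most c·n2 nonzero entries in each row, for some 0 ≤ c ≤ 1. Let L = L_C + L_R where L_C has constant rows summing to zero appropriately (L_C ∈ span{f_i e^T}) and L_R has constant columns (L_R ∈ span{e f_j^T}), with f_i = n e_i − e. Then |⟨K, L⟩| ≤ √(2c) ‖K‖_F ‖L‖_F. -/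
open Matrix Finset

/-- The vector `f_i = n·e_i − e`. -/
def fVec {n : ℕ} (i : Fin n) : Fin n → ℝ :=
  fun x => (n : ℝ) * (if x = i then 1 else 0) - 1

lemma fVec_sum {n : ℕ} (i : Fin n) : ∑ x, fVec i x = 0 := by
  simp [fVec, Finset.sum_sub_distrib, ← Finset.mul_sum]

lemma span_struct_C {n₁ n₂ : ℕ} {M : Matrix (Fin n₁) (Fin n₂) ℝ}
    (h : M ∈ Submodule.span ℝ
      (Set.range fun i : Fin n₁ => Matrix.vecMulVec (fVec i) (fun _ : Fin n₂ => (1 : ℝ)))) :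
    ∃ a : Fin n₁ → ℝ, (∑ x, a x = 0) ∧ ∀ x y, M x y = a x := by
  induction h using Submodule.span_induction with
  | mem m hm =>
      obtain ⟨i, rfl⟩ := hm
      exact ⟨fVec i, fVec_sum i, fun x y => by simp [Matrix.vecMulVec_apply]⟩
  | zero => exact ⟨0, by simp, by simp⟩
  | add m m' _ _ hm hm' =>
      obtain ⟨a, ha0, ha⟩ := hm; obtain ⟨b, hb0, hb⟩ := hm'
      exact ⟨a + b, by simp [Finset.sum_add_distrib, ha0, hb0],
        fun x y => by simp [Matrix.add_apply, ha x y, hb x y]⟩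
  | smul r m _ hm =>
      obtain ⟨a, ha0, ha⟩ := hm
      exact ⟨r • a, by simp [← Finset.mul_sum, ha0],
        fun x y => by simp [Matrix.smul_apply, ha x y]⟩

lemma span_struct_R {n₁ n₂ : ℕ} {M : Matrix (Fin n₁) (Fin n₂) ℝ}
    (h : M ∈ Submodule.span ℝ
      (Set.range fun j : Fin n₂ => Matrix.vecMulVec (fun _ : Fin n₁ => (1 : ℝ)) (fVec j))) :
    ∃ b : Fin n₂ → ℝ, (∑ y, b y = 0) ∧ ∀ x y, M x y = b y := by
  induction h using Submodule.span_induction with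
  | mem m hm =>
      obtain ⟨j, rfl⟩ := hm
      exact ⟨fVec j, fVec_sum j, fun x y => by simp [Matrix.vecMulVec_apply]⟩
  | zero => exact ⟨0, by simp, by simp⟩
  | add m m' _ _ hm hm' =>
      obtain ⟨a, ha0, ha⟩ := hm; obtain ⟨b, hb0, hb⟩ := hm'
      exact ⟨a + b, by simp [Finset.sum_add_distrib, ha0, hb0],
        fun x y => by simp [Matrix.add_apply, ha x y, hb x y]⟩
  | smul r m _ hm =>
      obtain ⟨a, ha0, ha⟩ := hm
      exact ⟨r • a, by simp [← Finset.mul_sum, ha0],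
        fun x y => by simp [Matrix.smul_apply, ha x y]⟩

lemma sparse_row_bound {n : ℕ} (v : Fin n → ℝ) (t : ℝ)
    (h : ((univ.filter fun y : Fin n => v y ≠ 0).card : ℝ) ≤ t) :
    (∑ y, v y) ^ 2 ≤ t * ∑ y, (v y) ^ 2 := by
  classical
  set s := univ.filter fun y : Fin n => v y ≠ 0 with hs
  have h1 : ∑ y, v y = ∑ y ∈ s, v y := by
    rw [← Finset.sum_filter_ne_zero]
  have h2 : (∑ y ∈ s, v y) ^ 2 ≤ (s.card : ℝ) * ∑ y ∈ s, (v y) ^ 2 := by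
    have := sq_sum_le_card_mul_sum_sq (s := s) (f := v)
    exact_mod_cast this
  have h3 : ∑ y ∈ s, (v y) ^ 2 ≤ ∑ y, (v y) ^ 2 :=
    Finset.sum_le_sum_of_subset_of_nonneg (Finset.filter_subset _ _)
      (fun _ _ _ => sq_nonneg _)
  have h4 : (0:ℝ) ≤ ∑ y ∈ s, (v y) ^ 2 := Finset.sum_nonneg fun _ _ => sq_nonneg _
  calc (∑ y, v y) ^ 2 = (∑ y ∈ s, v y) ^ 2 := by rw [h1]
    _ ≤ (s.card : ℝ) * ∑ y ∈ s, (v y) ^ 2 := h2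
    _ ≤ t * ∑ y ∈ s, (v y) ^ 2 := by apply mul_le_mul_of_nonneg_right h h4
    _ ≤ t * ∑ y, (v y) ^ 2 := by
        apply mul_le_mul_of_nonneg_left h3
        exact le_trans (Nat.cast_nonneg _) h

theorem stmt10 {n₁ n₂ : ℕ} (K : Matrix (Fin n₁) (Fin n₂) ℝ)
    (c : ℝ) (hc0 : 0 ≤ c) (hc1 : c ≤ 1)
    (hrow : ∀ x : Fin n₁,
      ((univ.filter fun y : Fin n₂ => K x y ≠ 0).card : ℝ) ≤ c * n₂)
    (hcol : ∀ y : Fin n₂,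
      ((univ.filter fun x : Fin n₁ => K x y ≠ 0).card : ℝ) ≤ c * n₁)
    (L_C L_R : Matrix (Fin n₁) (Fin n₂) ℝ)
    (hLC : L_C ∈ Submodule.span ℝ
      (Set.range fun i : Fin n₁ => Matrix.vecMulVec (fVec i) (fun _ : Fin n₂ => (1 : ℝ))))
    (hLR : L_R ∈ Submodule.span ℝ
      (Set.range fun j : Fin n₂ => Matrix.vecMulVec (fun _ : Fin n₁ => (1 : ℝ)) (fVec j))) :
    |frobInner K (L_C + L_R)|
      ≤ Real.sqrt (2 * c) * frobNorm K * frobNorm (L_C + L_R) := by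
  obtain ⟨a, ha0, haC⟩ := span_struct_C hLC
  obtain ⟨b, hb0, hbR⟩ := span_struct_R hLR
  set Ksq := ∑ x : Fin n₁, ∑ y : Fin n₂, (K x y) ^ 2 with hKsq
  have hKsqnn : 0 ≤ Ksq :=
    Finset.sum_nonneg fun _ _ => Finset.sum_nonneg fun _ _ => sq_nonneg _
  set A := ∑ x : Fin n₁, (a x) ^ 2 with hA
  set B := ∑ y : Fin n₂, (b y) ^ 2 with hB
  have hAnn : 0 ≤ A := Finset.sum_nonneg fun _ _ => sq_nonneg _
  have hBnn : 0 ≤ B := Finset.sum_nonneg fun _ _ => sq_nonneg _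
  have hLapp : ∀ x y, (L_C + L_R) x y = a x + b y := fun x y => by
    simp [Matrix.add_apply, ← haC x y, ← hbR x y]
  -- norm of L squared
  have hL2 : ∑ x : Fin n₁, ∑ y : Fin n₂, ((L_C + L_R) x y) ^ 2
      = (n₂ : ℝ) * A + (n₁ : ℝ) * B := by
    have h1 : ∀ x y, ((L_C + L_R) x y) ^ 2
        = (a x) ^ 2 + (b y) ^ 2 + 2 * (a x * b y) := fun x y => by
      rw [hLapp]; ring
    simp_rw [h1, Finset.sum_add_distrib, Finset.sum_const, Finset.card_univ,
      Fintype.card_fin, nsmul_eq_mul, ← Finset.mul_sum, ← Finset.sum_mul, ha0, hb0]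
    rw [hA, hB]; ring
  -- split the inner product
  have hS : frobInner K (L_C + L_R)
      = (∑ x, a x * ∑ y, K x y) + (∑ y, b y * ∑ x, K x y) := by
    rw [frobInner]
    rw [show (∑ x, ∑ y, K x y * (L_C + L_R) x y)
        = ∑ x, ∑ y, (a x * K x y + b y * K x y) from
      Finset.sum_congr rfl fun x _ => Finset.sum_congr rfl fun y _ => by
        rw [hLapp]; ring]
    simp_rw [Finset.sum_add_distrib]
    congr 1
    · exact Finset.sum_congr rfl fun x _ => (Finset.mul_sum _ _ _).symm
    · rw [Finset.sum_comm]
      exact Finset.sum_congr rfl fun y _ => (Finset.mul_sum _ _ _).symm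
  -- sparsity bounds
  have hRS : ∑ x : Fin n₁, (∑ y, K x y) ^ 2 ≤ c * n₂ * Ksq := by
    calc ∑ x : Fin n₁, (∑ y, K x y) ^ 2
        ≤ ∑ x : Fin n₁, (c * n₂ * ∑ y, (K x y) ^ 2) :=
          Finset.sum_le_sum fun x _ => sparse_row_bound _ _ (hrow x)
      _ = c * n₂ * Ksq := by rw [← Finset.mul_sum]
  have hCS : ∑ y : Fin n₂, (∑ x, K x y) ^ 2 ≤ c * n₁ * Ksq := by
    have hK' : Ksq = ∑ y : Fin n₂, ∑ x : Fin n₁, (K x y) ^ 2 := by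
      rw [hKsq, Finset.sum_comm]
    calc ∑ y : Fin n₂, (∑ x, K x y) ^ 2
        ≤ ∑ y : Fin n₂, (c * n₁ * ∑ x, (K x y) ^ 2) :=
          Finset.sum_le_sum fun y _ => sparse_row_bound _ _ (hcol y)
      _ = c * n₁ * Ksq := by rw [← Finset.mul_sum, ← hK']
  -- Cauchy–Schwarz
  have h1 : |∑ x, a x * ∑ y, K x y| ≤ Real.sqrt (A * (c * n₂ * Ksq)) := by
    rw [← Real.sqrt_sq_eq_abs]
    apply Real.sqrt_le_sqrt
    calc (∑ x, a x * ∑ y, K x y) ^ 2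
        ≤ A * ∑ x : Fin n₁, (∑ y, K x y) ^ 2 :=
          Finset.sum_mul_sq_le_sq_mul_sq _ _ _
      _ ≤ A * (c * n₂ * Ksq) := mul_le_mul_of_nonneg_left hRS hAnn
  have h2 : |∑ y, b y * ∑ x, K x y| ≤ Real.sqrt (B * (c * n₁ * Ksq)) := by
    rw [← Real.sqrt_sq_eq_abs]
    apply Real.sqrt_le_sqrt
    calc (∑ y, b y * ∑ x, K x y) ^ 2
        ≤ B * ∑ y : Fin n₂, (∑ x, K x y) ^ 2 :=
          Finset.sum_mul_sq_le_sq_mul_sq _ _ _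
      _ ≤ B * (c * n₁ * Ksq) := mul_le_mul_of_nonneg_left hCS hBnn
  have habs : |frobInner K (L_C + L_R)|
      ≤ Real.sqrt (A * (c * n₂ * Ksq)) + Real.sqrt (B * (c * n₁ * Ksq)) := by
    rw [hS]; exact (abs_add_le _ _).trans (add_le_add h1 h2)
  have hrhs : Real.sqrt (2 * c) * frobNorm K * frobNorm (L_C + L_R)
      = Real.sqrt (2 * c * Ksq * ((n₂ : ℝ) * A + (n₁ : ℝ) * B)) := by
    have h2c : (0:ℝ) ≤ 2 * c := by linarith
    rw [frobNorm, frobNorm, hL2, ← hKsq, ← Real.sqrt_mul h2c,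
      ← Real.sqrt_mul (mul_nonneg h2c hKsqnn)]
  rw [hrhs]
  refine habs.trans ?_
  set u := Real.sqrt (A * (c * n₂ * Ksq)) with hu
  set v := Real.sqrt (B * (c * n₁ * Ksq)) with hv
  have hun : 0 ≤ u := Real.sqrt_nonneg _
  have hvn : 0 ≤ v := Real.sqrt_nonneg _
  have hu2 : u ^ 2 = A * (c * n₂ * Ksq) :=
    Real.sq_sqrt (mul_nonneg hAnn (mul_nonneg (mul_nonneg hc0 (Nat.cast_nonneg _)) hKsqnn))
  have hv2 : v ^ 2 = B * (c * n₁ * Ksq) :=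
    Real.sq_sqrt (mul_nonneg hBnn (mul_nonneg (mul_nonneg hc0 (Nat.cast_nonneg _)) hKsqnn))
  have hy : (0:ℝ) ≤ 2 * c * Ksq * ((n₂ : ℝ) * A + (n₁ : ℝ) * B) :=
    mul_nonneg (mul_nonneg (mul_nonneg (by norm_num) hc0) hKsqnn)
      (add_nonneg (mul_nonneg (Nat.cast_nonneg _) hAnn) (mul_nonneg (Nat.cast_nonneg _) hBnn))
  rw [Real.le_sqrt (add_nonneg hun hvn) hy]
  nlinarith [sq_nonneg (u - v), hu2, hv2, mul_nonneg hun hvn]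
end
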